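/- General shear cancellation: if 2L₁τ₂ and 2L₂τ₁ are both odd integers, and i₁ ≠ i₂ in {1,2}, then y_{τ₂}^{(i₂;L₂)} ∘ y_{τ₁}^{(i₁;L₁)} ∘ y_{τ₂}^{(i₂;L₂)} ∘ y_{τ₁}^{(i₁;L₁)} = Id on 𝕋². -/
import Mathlib


open MeasureTheory Filter

noncomputable section

instance : Fact ((0:ℝ) < 1) := ⟨one_pos⟩

/-- The 1-dimensional torus `ℝ/ℤ`. -/
abbrev Torus : Type := AddCircle (1 : ℝ)

/-- The 2-dimensional torus `𝕋² = ℝ²/ℤ²`. -/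
abbrev Torus2 : Type := Torus × Torus

/-- The representative of a point of the torus in `[0,1)`. -/
noncomputable def rep (x : Torus) : ℝ := (AddCircle.equivIco 1 0 x : ℝ)

/-- The sign (`+1` on even strips of width `1/(2L)`, `-1` on odd ones). -/
noncomputable def shearSign (L : ℕ) (c : Torus) : ℝ :=
  if Even ⌊(2 * L : ℝ) * rep c⌋ then 1 else -1

/-- The Lagrangian shear flow `y_t^{(i;L)} : 𝕋² → 𝕋²`, translating the coordinate `i`
by `± t` according to the parity of the strip of width `1/(2L)` containing the
other coordinate. -/
noncomputable def shearFlow (i : Fin 2) (L : ℕ) (t : ℝ) (x : Torus2) : Torus2 :=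
  if i = 0 then (x.1 + ((shearSign L x.2 * t : ℝ) : Torus), x.2)
  else (x.1, x.2 + ((shearSign L x.1 * t : ℝ) : Torus))


lemma rep_coe (x : Torus) : ((rep x : ℝ) : Torus) = x :=
  (AddCircle.equivIco 1 0).symm_apply_apply x

lemma shearSign_eq (L : ℕ) (c : Torus) : shearSign L c = 1 ∨ shearSign L c = -1 := by
  unfold shearSign; split <;> simp

lemma shearSign_add (L : ℕ) (s : ℝ) (h : ∃ n : ℤ, Odd n ∧ (2*L:ℝ)*s = n) (c : Torus) :
    shearSign L (c + (s:Torus)) = - shearSign L c := by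
  obtain ⟨n, hn, hns⟩ := h
  have h1 : ((rep (c + (s:Torus)) - (rep c + s) : ℝ) : Torus) = 0 := by
    rw [sub_eq_add_neg, AddCircle.coe_add, AddCircle.coe_neg, AddCircle.coe_add,
      rep_coe, rep_coe]
    abel
  rw [AddCircle.coe_eq_zero_iff] at h1
  obtain ⟨k, hk⟩ := h1
  rw [zsmul_eq_mul, mul_one] at hk
  have hk' : rep (c + (s:Torus)) = rep c + s + k := by linarith
  have hfloor : (2*L:ℝ) * rep (c + (s:Torus)) = (2*L:ℝ) * rep c + ((n + 2*(L*k) : ℤ):ℝ) := by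
    push_cast
    rw [hk']
    nlinarith [hns]
  unfold shearSign
  rw [hfloor, Int.floor_add_intCast]
  have hNodd : ¬ Even (n + 2*((L:ℤ)*k)) :=
    Int.not_even_iff_odd.mpr (Odd.add_even hn (even_two_mul _))
  have key : Even (⌊(2*L:ℝ) * rep c⌋ + (n + 2*((L:ℤ)*k))) ↔ ¬ Even ⌊(2*L:ℝ) * rep c⌋ := by
    rw [Int.even_add]; tauto
  by_cases hE : Even ⌊(2*L:ℝ) * rep c⌋
  · rw [if_pos hE, if_neg (by rw [key]; tauto)]
  · rw [if_neg hE, if_pos (key.mpr hE)]; ring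

lemma h_scale (L : ℕ) (σ τ : ℝ) (hσ : σ = 1 ∨ σ = -1)
    (h : ∃ n : ℤ, Odd n ∧ (2*L:ℝ)*τ = n) : ∃ n : ℤ, Odd n ∧ (2*L:ℝ)*(σ*τ) = n := by
  obtain ⟨n, hn, he⟩ := h
  rcases hσ with h | h <;> subst h
  · exact ⟨n, hn, by linarith⟩
  · exact ⟨-n, hn.neg, by push_cast; linarith⟩

lemma add_coe_add_coe (x : Torus) (u v : ℝ) (h : u + v = 0) :
    x + (u:Torus) + (v:Torus) = x := by
  rw [add_assoc, ← AddCircle.coe_add, h]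
  simp

lemma key01 (L₁ L₂ : ℕ) (τ₁ τ₂ : ℝ)
    (h₂ : ∃ n : ℤ, Odd n ∧ (2 * L₁ : ℝ) * τ₂ = n)
    (h₁ : ∃ n : ℤ, Odd n ∧ (2 * L₂ : ℝ) * τ₁ = n) (a b : Torus) :
    shearFlow 1 L₂ τ₂ (shearFlow 0 L₁ τ₁ (shearFlow 1 L₂ τ₂ (shearFlow 0 L₁ τ₁ (a, b)))) = (a, b) := by
  simp only [shearFlow, show ((1:Fin 2) = 0) = False from by decide,
    show ((0:Fin 2) = 0) = True from by simp, if_true, if_false]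
  have e1 : shearSign L₂ (a + ((shearSign L₁ b * τ₁ : ℝ) : Torus)) = - shearSign L₂ a :=
    shearSign_add L₂ _ (h_scale L₂ _ τ₁ (shearSign_eq L₁ b) h₁) a
  rw [e1]
  have hneg : -shearSign L₂ a = 1 ∨ -shearSign L₂ a = -1 := by
    rcases shearSign_eq L₂ a with h | h <;> rw [h] <;> simp
  have e2 : shearSign L₁ (b + ((-shearSign L₂ a * τ₂ : ℝ) : Torus)) = - shearSign L₁ b :=
    shearSign_add L₁ _ (h_scale L₁ _ τ₂ hneg h₂) b
  rw [e2, add_coe_add_coe a (shearSign L₁ b * τ₁) (-shearSign L₁ b * τ₁) (by ring),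
    add_coe_add_coe b (-shearSign L₂ a * τ₂) (shearSign L₂ a * τ₂) (by ring)]

lemma shear_swap0 (L : ℕ) (t : ℝ) (p : Torus2) :
    shearFlow 0 L t p.swap = (shearFlow 1 L t p).swap := by
  simp [shearFlow, Prod.swap, show ((1:Fin 2) = 0) = False from by decide]

lemma shear_swap1 (L : ℕ) (t : ℝ) (p : Torus2) :
    shearFlow 1 L t p.swap = (shearFlow 0 L t p).swap := by
  simp [shearFlow, Prod.swap, show ((1:Fin 2) = 0) = False from by decide]

lemma key10 (L₁ L₂ : ℕ) (τ₁ τ₂ : ℝ)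
    (h₂ : ∃ n : ℤ, Odd n ∧ (2 * L₁ : ℝ) * τ₂ = n)
    (h₁ : ∃ n : ℤ, Odd n ∧ (2 * L₂ : ℝ) * τ₁ = n) (a b : Torus) :
    shearFlow 0 L₂ τ₂ (shearFlow 1 L₁ τ₁ (shearFlow 0 L₂ τ₂ (shearFlow 1 L₁ τ₁ (a, b)))) = (a, b) := by
  have h : (a, b) = (Prod.mk b a).swap := rfl
  rw [h, shear_swap1, shear_swap0, shear_swap1, shear_swap0,
    key01 L₁ L₂ τ₁ τ₂ h₂ h₁ b a]

/-- **General shear cancellation.** If `2L₁τ₂` and `2L₂τ₁` are both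
odd integers and `i₁ ≠ i₂`, then
`y_{τ₂}^{(i₂;L₂)} ∘ y_{τ₁}^{(i₁;L₁)} ∘ y_{τ₂}^{(i₂;L₂)} ∘ y_{τ₁}^{(i₁;L₁)} = Id` on `𝕋²`. -/
theorem shear_cancellation_general (L₁ L₂ : ℕ) (hL₁ : 0 < L₁) (hL₂ : 0 < L₂)
    (i₁ i₂ : Fin 2) (hne : i₁ ≠ i₂) (τ₁ τ₂ : ℝ) (hτ₁ : 0 < τ₁) (hτ₂ : 0 < τ₂)
    (h₂ : ∃ n : ℤ, Odd n ∧ (2 * L₁ : ℝ) * τ₂ = n)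
    (h₁ : ∃ n : ℤ, Odd n ∧ (2 * L₂ : ℝ) * τ₁ = n) :
    (shearFlow i₂ L₂ τ₂) ∘ (shearFlow i₁ L₁ τ₁) ∘
      (shearFlow i₂ L₂ τ₂) ∘ (shearFlow i₁ L₁ τ₁) = id := by
  funext x
  obtain ⟨a, b⟩ := x
  simp only [Function.comp_apply, id_eq]
  fin_cases i₁ <;> fin_cases i₂
  · exact absurd rfl hne
  · exact key01 L₁ L₂ τ₁ τ₂ h₂ h₁ a b
  · exact key10 L₁ L₂ τ₁ τ₂ h₂ h₁ a b
  · exact absurd rfl hne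

end
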